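/- arXiv:1602.08903 — 2 statements merged into one kernel-verified Lean document; each statement's English description precedes it below -/
import Mathlib

section
/- Let AF be a finite argumentation framework. Every semi-stable extension of AF is a preferred extension of AF. -/
/- Argumentation framework notions over argument type `A` with attack relation `att`. -/
section AF
variable {A : Type*}

/-- `S⁺`: the set of arguments attacked by `S`. -/
def plusSet (att : A → A → Prop) (S : Set A) : Set A := {b | ∃ a ∈ S, att a b}

/-- The range of `S`: `S ∪ S⁺`. -/
def rangeOf (att : A → A → Prop) (S : Set A) : Set A := S ∪ plusSet att S

def conflictFree (att : A → A → Prop) (S : Set A) : Prop :=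
  ∀ a ∈ S, ∀ b ∈ S, ¬ att a b

def acceptable (att : A → A → Prop) (S : Set A) (a : A) : Prop :=
  ∀ b, att b a → ∃ c ∈ S, att c b

def admissible (att : A → A → Prop) (S : Set A) : Prop :=
  conflictFree att S ∧ ∀ a ∈ S, acceptable att S a

def completeExt (att : A → A → Prop) (S : Set A) : Prop :=
  admissible att S ∧ ∀ a, acceptable att S a → a ∈ S

def preferredExt (att : A → A → Prop) (S : Set A) : Prop :=
  admissible att S ∧ ∀ T, admissible att T → S ⊆ T → T = S

def stableExt (att : A → A → Prop) (S : Set A) : Prop :=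
  conflictFree att S ∧ ∀ b, b ∉ S → ∃ a ∈ S, att a b

def semiStableExt (att : A → A → Prop) (S : Set A) : Prop :=
  completeExt att S ∧ ∀ T, completeExt att T →
    rangeOf att S ⊆ rangeOf att T → rangeOf att T ⊆ rangeOf att S

def stageExt (att : A → A → Prop) (S : Set A) : Prop :=
  conflictFree att S ∧ ∀ T, conflictFree att T →
    rangeOf att S ⊆ rangeOf att T → rangeOf att T ⊆ rangeOf att S

end AF

/- Normal logic programs. -/
section LP
variable {α : Type*}

structure Clause (α : Type*) where
  head : α
  pos : Set α
  neg : Set α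

/-- `M` satisfies clause `C` read classically (`not` = classical negation). -/
def satClause (M : Set α) (C : Clause α) : Prop :=
  (C.pos ⊆ M ∧ C.neg ∩ M = ∅) → C.head ∈ M

/-- `M` is a 2-valued classical model of the program `P`. -/
def isModel (M : Set α) (P : Set (Clause α)) : Prop := ∀ C ∈ P, satClause M C

/-- Gelfond–Lifschitz reduct `P^M`. -/
def glReduct (P : Set (Clause α)) (M : Set α) : Set (Clause α) :=
  {C' | ∃ C ∈ P, C.neg ∩ M = ∅ ∧ C' = ⟨C.head, C.pos, ∅⟩}

/-- The facts of a program. -/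
def facts (P : Set (Clause α)) : Set α :=
  {a | ∃ C ∈ P, C.head = a ∧ C.pos = ∅ ∧ C.neg = ∅}

def supportedModel (M : Set α) (P : Set (Clause α)) : Prop :=
  isModel M P ∧ ∀ a ∈ M, ∃ C ∈ P, C.head = a ∧ C.pos ⊆ M ∧ C.neg ∩ M = ∅

/-- `M` is a stable model of `P`: a ⊆-minimal model of `P^M`. -/
def stableModel (M : Set α) (P : Set (Clause α)) : Prop :=
  isModel M (glReduct P M) ∧ ∀ N ⊆ M, isModel N (glReduct P M) → N = M

/-- The reduction `RED(P,M)`. -/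
def red (P : Set (Clause α)) (M : Set α) : Set (Clause α) :=
  {C' | ∃ C ∈ P, C' = ⟨C.head, C.pos, C.neg ∩ M⟩}

/-- `M` is a p-stable model of `P`. -/
def pStableModel (M : Set α) (P : Set (Clause α)) : Prop :=
  isModel M (red P M) ∧ ∀ a ∈ M, ∀ I : Set α, isModel I (red P M) → a ∈ I

/-- Atoms occurring in `P`. -/
def atomsOf (P : Set (Clause α)) : Set α :=
  ⋃ C ∈ P, ({C.head} ∪ C.pos ∪ C.neg)

end LP

/- The mappings `Π_AF⁻` and `Π_AF`; the atom `def(x)` is identified with `x`,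
so the signature `{def(x) | x ∈ AR}` is `Set.univ`. -/
section Maps
variable {A : Type*}

def piMinus (att : A → A → Prop) : Set (Clause A) :=
  {C | ∃ a b, att b a ∧ C = ⟨a, ∅, {b}⟩}

def piAF (att : A → A → Prop) : Set (Clause A) :=
  piMinus att ∪ {C | ∃ a b, att b a ∧ C = ⟨a, {c | att c b}, ∅⟩}

/-- `Facts(P^M) ∪ (L \ M)`, with `L = {def(x) | x ∈ AR} = Set.univ`. -/
def scSet (P : Set (Clause A)) (M : Set A) : Set A := facts (glReduct P M) ∪ Mᶜ

/-- GL-supported model of `Π_AF`. -/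
def glSupportedModel (att : A → A → Prop) (M : Set A) : Prop :=
  supportedModel M (piAF att) ∧ ∀ N, supportedModel N (piAF att) →
    scSet (piAF att) M ⊆ scSet (piAF att) N → scSet (piAF att) N ⊆ scSet (piAF att) M

/-- GL-stage model of `Π_AF⁻`. -/
def glStageModel (att : A → A → Prop) (M : Set A) : Prop :=
  isModel M (piMinus att) ∧ ∀ N, isModel N (piMinus att) →
    scSet (piMinus att) M ⊆ scSet (piMinus att) N → scSet (piMinus att) N ⊆ scSet (piMinus att) M

end Maps


section Aux
variable {A : Type*}

lemma fundamental (att : A → A → Prop) {S : Set A} (hS : admissible att S)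
    {a : A} (ha : acceptable att S a) : admissible att (S ∪ {a}) := by
  obtain ⟨hcf, hacc⟩ := hS
  have haa : ∀ b ∈ S, ¬ att a b ∧ ¬ att b a := by
    intro b hb
    constructor
    · intro hab
      obtain ⟨d, hd, hdb⟩ := hacc b hb a hab
      obtain ⟨e, he, hed⟩ := ha d hdb
      exact hcf e he d hd hed
    · intro hba
      obtain ⟨d, hd, hdb⟩ := ha b hba
      exact hcf d hd b hb hdb
  have hnaa : ¬ att a a := by
    intro haa'
    obtain ⟨d, hd, hda⟩ := ha a haa'
    obtain ⟨e, he, hed⟩ := ha d hda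
    exact hcf e he d hd hed
  constructor
  · rintro b (hb | rfl) c (hc | rfl)
    · exact hcf b hb c hc
    · exact (haa b hb).2
    · exact (haa c hc).1
    · exact hnaa
  · rintro x (hx | rfl)
    · intro b hb
      obtain ⟨c, hc, hcb⟩ := hacc x hx b hb
      exact ⟨c, Or.inl hc, hcb⟩
    · intro b hb
      obtain ⟨c, hc, hcb⟩ := ha b hb
      exact ⟨c, Or.inl hc, hcb⟩

lemma exists_complete_superset [Finite A] (att : A → A → Prop) {S : Set A}
    (hS : admissible att S) : ∃ T, S ⊆ T ∧ completeExt att T := by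
  obtain ⟨T, hST, hmax⟩ := Finite.exists_le_maximal hS
  refine ⟨T, hST, hmax.1, ?_⟩
  intro a ha
  have := fundamental att hmax.1 ha
  have hTa : T ⊆ T ∪ {a} := Set.subset_union_left
  have := hmax.2 this hTa
  exact this (Or.inr rfl)

end Aux

theorem stmt7 {A : Type*} [Finite A] (att : A → A → Prop) (E : Set A)
    (h : semiStableExt att E) : preferredExt att E := by
  obtain ⟨hcomp, hmaxr⟩ := h
  refine ⟨hcomp.1, ?_⟩
  intro T hT hET
  obtain ⟨T', hTT', hT'c⟩ := exists_complete_superset att hT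
  have hrange : rangeOf att E ⊆ rangeOf att T' := by
    rintro x (hx | ⟨a, ha, hax⟩)
    · exact Or.inl (hTT' (hET hx))
    · exact Or.inr ⟨a, hTT' (hET ha), hax⟩
  have hback := hmaxr T' hT'c hrange
  apply Set.Subset.antisymm _ hET
  intro a haT
  by_contra haE
  have haR : a ∈ rangeOf att E := hback (Or.inl (hTT' haT))
  rcases haR with h1 | ⟨b, hb, hba⟩
  · exact haE h1
  · exact hT.1 b (hET hb) a haT hba
end

section
/- Let AF be a finite argumentation framework. Every admissible set of AF is contained in a complete extension E with (S ∪ S⁺) ⊆ (E ∪ E⁺); in particular, for every admissible set S there is a complete extension whose range contains the range of S. -/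
/-! A ⊆-maximal admissible superset `E` of `S` exists by finiteness. By Dung's fundamental lemma
an argument acceptable w.r.t. `E` could be added to `E` keeping it admissible, so maximality puts
it in `E`: `E` is complete. Ranges grow with the set, so the range of `E` contains that of `S`. -/

section

variable {A : Type*} {att : A → A → Prop}

theorem acceptable.mono {S T : Set A} {a : A} (hST : S ⊆ T) (ha : acceptable att S a) :
    acceptable att T a := fun b hb =>
  let ⟨c, hc, hcb⟩ := ha b hb
  ⟨c, hST hc, hcb⟩

theorem admissible_insert {S : Set A} {a : A} (hS : admissible att S)
    (ha : acceptable att S a) : admissible att (insert a S) := by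
  have hacc : ∀ x ∈ insert a S, acceptable att S x := by
    rintro x (rfl | hx)
    exacts [ha, hS.2 x hx]
  refine ⟨fun x hx y hy hxy => ?_, fun x hx => (hacc x hx).mono (Set.subset_insert a S)⟩
  -- `S` defends `y` against `x` by some `c`, and then defends `x` against `c`: an attack inside `S`.
  obtain ⟨c, hc, hcx⟩ := hacc y hy x hxy
  obtain ⟨d, hd, hdc⟩ := hacc x hx c hcx
  exact hS.1 d hd c hc hdc

theorem completeExt_of_maximal_admissible {E : Set A} (hE : Maximal (admissible att) E) :
    completeExt att E :=
  ⟨hE.prop, fun _ ha => hE.mem_of_prop_insert (admissible_insert hE.prop ha)⟩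

theorem rangeOf_mono {S T : Set A} (hST : S ⊆ T) : rangeOf att S ⊆ rangeOf att T := by
  rintro x (hx | ⟨c, hc, hcx⟩)
  exacts [Or.inl (hST hx), Or.inr ⟨c, hST hc, hcx⟩]

end

theorem stmt16 {A : Type*} [Finite A] (att : A → A → Prop) (S : Set A)
    (h : admissible att S) :
    ∃ E, completeExt att E ∧ S ⊆ E ∧ rangeOf att S ⊆ rangeOf att E := by
  obtain ⟨E, hSE, hE⟩ := Finite.exists_le_maximal h
  exact ⟨E, completeExt_of_maximal_admissible hE, hSE, rangeOf_mono hSE⟩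
end
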